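/- (Proposition 1, part (v), core computation) The normalized double sum arising in Cov(T_n, V_n) converges: lim_{n→∞} (2/n) Σ_{i=1}^{n-1} Σ_{j=1}^{n} E[e^{-α|t_{i+1}-t_j| - α|t_i-t_j|}] = 4 g(α) + 4 g(α) K, where K = g(2α)/(1 - g(2α)); equivalently the limit equals 4g(α)/(1 - g(2α)). Multiplied by η², this is the paper's asymptotic value of n·Cov(T_n, V_n). -/

import Mathlib

/-!
With `t_i = Δ_0 + ⋯ + Δ_{i-1}`, the exponent `-α |t_{i+1} - t_j| - α |t_i - t_j|` equals
`-α Δ_i - 2α ∑_{k ∈ S} Δ_k`, where `S` is the set of the `d` spacings strictly between the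
interval `[t_i, t_{i+1}]` and `t_j` (`d = i - j` for `j ≤ i`, `d = j - i - 1` for `j > i`).
By independence its expectation is `g(α) q^d` with `q = g(2α) < 1`. Summing over `j` gives
`g(α) (G_i + G_{n-i})` with `G_m = 1 + q + ⋯ + q^{m-1}`, so the normalized double sum is `4 g(α)`
times the Cesàro mean of `G_0, …, G_{n-1}`, which tends to `4 g(α) / (1 - q)`.
-/

open MeasureTheory ProbabilityTheory Real Set Filter Finset

namespace Finset

variable {M : Type*} [AddCommMonoid M] (f : ℕ → M)

lemma sum_Icc_one_comp_sub (i : ℕ) : ∑ j ∈ Icc 1 i, f (i - j) = ∑ k ∈ range i, f k := by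
  rw [← Ico_add_one_right_eq_Icc, sum_Ico_reflect f 1 le_rfl, Nat.sub_self,
    add_tsub_cancel_right, range_eq_Ico]

lemma sum_Ioc_comp_sub_succ (i n : ℕ) :
    ∑ j ∈ Ioc i n, f (j - (i + 1)) = ∑ k ∈ range (n - i), f k := by
  rw [← Icc_add_one_left_eq_Ioc, ← Ico_add_one_right_eq_Icc, sum_Ico_eq_sum_range]
  simp

lemma sum_Icc_one_pred_comp_sub (n : ℕ) :
    ∑ i ∈ Icc 1 (n - 1), f (n - i) = ∑ i ∈ Icc 1 (n - 1), f i := by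
  cases n with
  | zero => rfl
  | succ m =>
    rw [add_tsub_cancel_right, ← Ico_add_one_right_eq_Icc, sum_Ico_reflect f 1 (by omega)]
    simp

lemma sum_Icc_one_pred_eq_sum_range (h0 : f 0 = 0) (n : ℕ) :
    ∑ i ∈ Icc 1 (n - 1), f i = ∑ i ∈ range n, f i := by
  cases n with
  | zero => rfl
  | succ m =>
    rw [sum_range_succ', h0, add_zero, add_tsub_cancel_right, ← Ico_add_one_right_eq_Icc,
      sum_Ico_eq_sum_range]
    simp [add_comm]

end Finset

section PartialSums

variable {x : ℕ → ℝ} (hx : ∀ k, 0 ≤ x k)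
include hx

lemma abs_sum_range_sub_sum_range {i j : ℕ} (h : j ≤ i) :
    |∑ k ∈ range i, x k - ∑ k ∈ range j, x k| = ∑ k ∈ Ico j i, x k := by
  rw [← sum_Ico_eq_sub _ h, abs_of_nonneg (sum_nonneg fun k _ ↦ hx k)]

lemma abs_sum_range_succ_sub_add_abs_sum_range_sub_of_le {i j : ℕ} (h : j ≤ i) :
    |∑ k ∈ range (i + 1), x k - ∑ k ∈ range j, x k| + |∑ k ∈ range i, x k - ∑ k ∈ range j, x k|
      = x i + 2 * ∑ k ∈ Ico j i, x k := by
  rw [abs_sum_range_sub_sum_range hx (by omega), abs_sum_range_sub_sum_range hx h,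
    sum_Ico_succ_top h]
  ring

lemma abs_sum_range_succ_sub_add_abs_sum_range_sub_of_lt {i j : ℕ} (h : i < j) :
    |∑ k ∈ range (i + 1), x k - ∑ k ∈ range j, x k| + |∑ k ∈ range i, x k - ∑ k ∈ range j, x k|
      = x i + 2 * ∑ k ∈ Ico (i + 1) j, x k := by
  rw [abs_sub_comm, abs_sub_comm (∑ k ∈ range i, x k), abs_sum_range_sub_sum_range hx h,
    abs_sum_range_sub_sum_range hx h.le, sum_eq_sum_Ico_succ_bot h]
  ring

end PartialSums

namespace ProbabilityTheory

variable {Ω ι : Type*} [MeasurableSpace Ω] {μ : Measure Ω}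

lemma mgf_lt_one [IsProbabilityMeasure μ] {X : Ω → ℝ} (hX : Measurable X) (hpos : ∀ ω, 0 < X ω)
    {t : ℝ} (ht : t < 0) : mgf X μ t < 1 := by
  have hlt : ∀ ω, exp (t * X ω) < 1 :=
    fun ω ↦ Real.exp_lt_one_iff.2 (mul_neg_of_neg_of_pos ht (hpos ω))
  have hint : Integrable (fun ω ↦ exp (t * X ω)) μ :=
    .of_bound (hX.const_mul t).exp.aestronglyMeasurable 1
      (.of_forall fun ω ↦ by rw [norm_of_nonneg (exp_pos _).le]; exact (hlt ω).le)
  have hgap : 0 < ∫ ω, (1 - exp (t * X ω)) ∂μ := by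
    rw [integral_pos_iff_support_of_nonneg (fun ω ↦ sub_nonneg.2 (hlt ω).le)
      ((integrable_const 1).sub hint)]
    simp [Function.support, sub_eq_zero, (hlt _).ne']
  rw [integral_sub (integrable_const 1) hint] at hgap
  simpa [mgf] using hgap

lemma integral_exp_mul_add_mul_sum {X : ι → Ω → ℝ} (hX : iIndepFun X μ)
    (hmeas : ∀ k, Measurable (X k)) {j : ι} (hident : ∀ k, IdentDistrib (X k) (X j) μ μ)
    (s u : ℝ) {i : ι} {S : Finset ι} (hi : i ∉ S) :
    ∫ ω, exp (s * X i ω + u * ∑ k ∈ S, X k ω) ∂μ = mgf (X j) μ s * mgf (X j) μ u ^ #S := by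
  have hind : IndepFun (X i) (∑ k ∈ S, X k) μ :=
    (hX.indepFun_finsetSum_of_notMem hmeas hi).symm
  calc ∫ ω, exp (s * X i ω + u * ∑ k ∈ S, X k ω) ∂μ
      = ∫ ω, exp (s * X i ω) * exp (u * (∑ k ∈ S, X k) ω) ∂μ := by simp [exp_add]
    _ = mgf (X i) μ s * mgf (∑ k ∈ S, X k) μ u :=
      (hind.exp_mul s u).integral_fun_mul_eq_mul_integral (by fun_prop) (by fun_prop)
    _ = mgf (X j) μ s * mgf (X j) μ u ^ #S := by
      rw [hX.mgf_sum hmeas, prod_eq_pow_card fun k _ ↦ mgf_congr_of_identDistrib _ _ (hident k) u,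
        mgf_congr_of_identDistrib _ _ (hident i) s]

end ProbabilityTheory

section RenewalTimes

variable {Ω : Type*} [MeasurableSpace Ω] {P : Measure Ω} {Δ : ℕ → Ω → ℝ} (hΔ : iIndepFun Δ P)
  (hmeas : ∀ k, Measurable (Δ k)) (hident : ∀ k, IdentDistrib (Δ k) (Δ 0) P P)
  (hpos : ∀ k ω, 0 ≤ Δ k ω) {t : ℕ → Ω → ℝ} (ht : ∀ i ω, t i ω = ∑ k ∈ range i, Δ k ω) (α : ℝ)
include hΔ hmeas hident hpos ht

lemma integral_exp_neg_mul_abs_sub_of_le {i j : ℕ} (h : j ≤ i) :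
    ∫ ω, exp (-α * |t (i + 1) ω - t j ω| - α * |t i ω - t j ω|) ∂P
      = mgf (Δ 0) P (-α) * mgf (Δ 0) P (-(2 * α)) ^ (i - j) := by
  have hpath : ∀ ω, -α * |t (i + 1) ω - t j ω| - α * |t i ω - t j ω|
      = -α * Δ i ω + -(2 * α) * ∑ k ∈ Ico j i, Δ k ω := fun ω ↦ by
    simp only [ht]
    linear_combination (-α) * abs_sum_range_succ_sub_add_abs_sum_range_sub_of_le (hpos · ω) h
  simp_rw [hpath]
  rw [integral_exp_mul_add_mul_sum hΔ hmeas hident _ _ (by simp), Nat.card_Ico]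

lemma integral_exp_neg_mul_abs_sub_of_lt {i j : ℕ} (h : i < j) :
    ∫ ω, exp (-α * |t (i + 1) ω - t j ω| - α * |t i ω - t j ω|) ∂P
      = mgf (Δ 0) P (-α) * mgf (Δ 0) P (-(2 * α)) ^ (j - (i + 1)) := by
  have hpath : ∀ ω, -α * |t (i + 1) ω - t j ω| - α * |t i ω - t j ω|
      = -α * Δ i ω + -(2 * α) * ∑ k ∈ Ico (i + 1) j, Δ k ω := fun ω ↦ by
    simp only [ht]
    linear_combination (-α) * abs_sum_range_succ_sub_add_abs_sum_range_sub_of_lt (hpos · ω) h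
  simp_rw [hpath]
  rw [integral_exp_mul_add_mul_sum hΔ hmeas hident _ _ (by simp), Nat.card_Ico]

lemma sum_Icc_integral_exp_neg_mul_abs_sub {i n : ℕ} (hi : i ≤ n) :
    ∑ j ∈ Icc 1 n, ∫ ω, exp (-α * |t (i + 1) ω - t j ω| - α * |t i ω - t j ω|) ∂P
      = mgf (Δ 0) P (-α) * (∑ k ∈ range i, mgf (Δ 0) P (-(2 * α)) ^ k
          + ∑ k ∈ range (n - i), mgf (Δ 0) P (-(2 * α)) ^ k) := by
  have hIcc : ∀ m, Finset.Icc 1 m = Finset.Ioc 0 m := Finset.Icc_add_one_left_eq_Ioc 0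
  rw [hIcc, ← sum_Ioc_consecutive _ i.zero_le hi, ← hIcc,
    sum_congr rfl fun j hj ↦ integral_exp_neg_mul_abs_sub_of_le hΔ hmeas hident hpos ht α
      (Finset.mem_Icc.1 hj).2,
    sum_congr rfl fun j hj ↦ integral_exp_neg_mul_abs_sub_of_lt hΔ hmeas hident hpos ht α
      (Finset.mem_Ioc.1 hj).1,
    ← mul_sum, ← mul_sum, sum_Icc_one_comp_sub (fun k ↦ mgf (Δ 0) P (-(2 * α)) ^ k),
    sum_Ioc_comp_sub_succ (fun k ↦ mgf (Δ 0) P (-(2 * α)) ^ k), mul_add]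

lemma sum_Icc_sum_Icc_integral_exp_neg_mul_abs_sub (n : ℕ) :
    ∑ i ∈ Icc 1 (n - 1), ∑ j ∈ Icc 1 n,
        ∫ ω, exp (-α * |t (i + 1) ω - t j ω| - α * |t i ω - t j ω|) ∂P
      = 2 * mgf (Δ 0) P (-α) * ∑ i ∈ range n, ∑ k ∈ range i, mgf (Δ 0) P (-(2 * α)) ^ k := by
  set G : ℕ → ℝ := fun i ↦ ∑ k ∈ range i, mgf (Δ 0) P (-(2 * α)) ^ k
  rw [sum_congr rfl fun i hi ↦ sum_Icc_integral_exp_neg_mul_abs_sub hΔ hmeas hident hpos ht α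
      (by simp at hi; omega), ← mul_sum, sum_add_distrib, sum_Icc_one_pred_comp_sub G,
    sum_Icc_one_pred_eq_sum_range G (by simp [G])]
  ring

end RenewalTimes

theorem normalized_double_sum_covTV_tendsto_general
    {Ω : Type*} [MeasurableSpace Ω] (P : Measure Ω) [IsProbabilityMeasure P]
    (α : ℝ) (hα : 0 < α)
    (Δ : ℕ → Ω → ℝ) (hΔmeas : ∀ k, Measurable (Δ k))
    (hΔpos : ∀ k ω, 0 < Δ k ω)
    (hiid : iIndepFun Δ P)
    (hident : ∀ k, Measure.map (Δ k) P = Measure.map (Δ 0) P)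
    (t : ℕ → Ω → ℝ) (ht : ∀ i ω, t i ω = ∑ k ∈ Finset.range i, Δ k ω)
    (g : ℝ → ℝ) (hg : ∀ s, g s = ∫ ω, Real.exp (-s * Δ 0 ω) ∂P) :
    Tendsto (fun n : ℕ => (2 / (n : ℝ)) *
        ∑ i ∈ Finset.Icc 1 (n - 1), ∑ j ∈ Finset.Icc 1 n,
          ∫ ω, Real.exp (-α * |t (i + 1) ω - t j ω| - α * |t i ω - t j ω|) ∂P)
      atTop
      (nhds (4 * g α + 4 * g α * (g (2 * α) / (1 - g (2 * α))))) := by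
  have hg_mgf : ∀ s, g s = mgf (Δ 0) P (-s) := hg
  have hΔident : ∀ k, IdentDistrib (Δ k) (Δ 0) P P :=
    fun k ↦ ⟨(hΔmeas k).aemeasurable, (hΔmeas 0).aemeasurable, hident k⟩
  have hq_lt : g (2 * α) < 1 := by
    rw [hg_mgf]; exact mgf_lt_one (hΔmeas 0) (hΔpos 0) (by linarith)
  have hq_nonneg : 0 ≤ g (2 * α) := by rw [hg_mgf]; exact mgf_nonneg
  have hlimit : 4 * g α + 4 * g α * (g (2 * α) / (1 - g (2 * α)))
      = 4 * g α * (1 - g (2 * α))⁻¹ := by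
    field_simp [(sub_pos.2 hq_lt).ne']
    ring
  rw [hlimit]
  refine ((hasSum_geometric_of_lt_one hq_nonneg hq_lt).tendsto_sum_nat.cesaro.const_mul
    (4 * g α)).congr fun n ↦ ?_
  rw [sum_Icc_sum_Icc_integral_exp_neg_mul_abs_sub hiid hΔmeas hΔident (fun k ω ↦ (hΔpos k ω).le)
    ht α n, hg_mgf, hg_mgf]
  ring

/-- Proposition 1, part (v), core computation: For renewal times
`t_i = Δ_1 + ⋯ + Δ_i` of an i.i.d. positive integrable sequence with Laplace transform
`g s = E[e^{-s Δ_1}]`, and `α > 0`,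
`lim_{n→∞} (2/n) ∑_{i=1}^{n-1} ∑_{j=1}^{n} E[e^{-α|t_{i+1}-t_j| - α|t_i-t_j|}]
  = 4 g(α) + 4 g(α) K` where `K = g(2α)/(1 - g(2α))`.
(Here `Δ` is indexed from `0`, so `t i = ∑_{k<i} Δ k` is `Δ_1 + ⋯ + Δ_i`.) -/
theorem normalized_double_sum_covTV_tendsto
    {Ω : Type*} [MeasurableSpace Ω] (P : Measure Ω) [IsProbabilityMeasure P]
    (α : ℝ) (hα : 0 < α)
    (Δ : ℕ → Ω → ℝ) (hΔmeas : ∀ k, Measurable (Δ k))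
    (hΔpos : ∀ k ω, 0 < Δ k ω) (hΔint : ∀ k, Integrable (Δ k) P)
    (hiid : iIndepFun Δ P)
    (hident : ∀ k, Measure.map (Δ k) P = Measure.map (Δ 0) P)
    (t : ℕ → Ω → ℝ) (ht : ∀ i ω, t i ω = ∑ k ∈ Finset.range i, Δ k ω)
    (g : ℝ → ℝ) (hg : ∀ s, g s = ∫ ω, Real.exp (-s * Δ 0 ω) ∂P) :
    Tendsto (fun n : ℕ => (2 / (n : ℝ)) *
        ∑ i ∈ Finset.Icc 1 (n - 1), ∑ j ∈ Finset.Icc 1 n,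
          ∫ ω, Real.exp (-α * |t (i + 1) ω - t j ω| - α * |t i ω - t j ω|) ∂P)
      atTop
      (nhds (4 * g α + 4 * g α * (g (2 * α) / (1 - g (2 * α))))) :=
  normalized_double_sum_covTV_tendsto_general P α hα Δ hΔmeas hΔpos hiid hident t ht g hg
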